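/- Let (X, ≤) be a bi-directed partially ordered set with complete metric d, and A : X² → X mixed monotone with d(A(x,y), A(u,v)) ≤ φ(max{d(x,u), d(y,v)}) whenever x ≤ u and y ≥ v, for some nondecreasing φ : [0,∞) → [0,∞) with φⁿ(t) → 0 for all t ≥ 0. Assume A is continuous, and there exist x₀, y₀ with x₀ ≤ A(x₀, y₀) and y₀ ≥ A(y₀, x₀). Then there exists x* ∈ X such that (x*, x*) is the unique coupled fixed point of A (in particular, x* is the unique fixed point of A), and the s-composition iterates satisfy Aⁿ(x, y) → x* for all x, y ∈ X. -/

import Mathlib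

open Filter Topology

/-- Iterates of a bivariate self-map with respect to the symmetric composition:
`A⁰(x,y) = x`, `Aⁿ⁺¹(x,y) = A(Aⁿ(x,y), Aⁿ(y,x))`. -/
def siter {X : Type*} (A : X → X → X) : ℕ → X → X → X
  | 0 => fun x _ => x
  | n + 1 => fun x y => A (siter A n x y) (siter A n y x)

/-! A mixed monotone `A` is the same as the monotone map `(x, y) ↦ (A(x,y), A(y,x))` on
`X × Xᵒᵈ`, whose sup metric turns the hypothesis on `A` into a `φ`-contraction on comparable
pairs. For such a map `T`, comparable orbits approach each other at rate `φⁿ`; an increasing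
orbit is therefore Cauchy, and its limit is a fixed point by continuity. Since any two points of
`X × Xᵒᵈ` have a common lower bound, every orbit is comparable to that fixed point through a
lower bound, hence converges to it. The fixed point `(a, b)` and its swap `(b, a)` then
coincide, so `a = b`. -/

open Function OrderDual

/-- A comparison function in the sense of Rus. -/
structure IsComparisonFunction (φ : ℝ → ℝ) : Prop where
  mono : ∀ s t, 0 ≤ s → s ≤ t → φ s ≤ φ t
  tendsto_iterate : ∀ t, 0 ≤ t → Tendsto (fun n => φ^[n] t) atTop (𝓝 0)

theorem IsComparisonFunction.lt_self {φ : ℝ → ℝ} (hφ : IsComparisonFunction φ) {t : ℝ}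
    (ht : 0 < t) : φ t < t := by
  by_contra! h
  have hle : ∀ n, t ≤ φ^[n] t := by
    intro n
    induction n with
    | zero => rfl
    | succ n ih => rw [iterate_succ_apply']; exact h.trans (hφ.mono _ _ ht.le ih)
  linarith [ge_of_tendsto (hφ.tendsto_iterate t ht.le) (Eventually.of_forall hle)]

section OrderedContraction

variable {Y : Type*} [Preorder Y] [MetricSpace Y] {T : Y → Y} {φ : ℝ → ℝ}

theorem dist_iterate_le_of_le (hφ : IsComparisonFunction φ) (hT : Monotone T)
    (hcontr : ∀ p q, p ≤ q → dist (T p) (T q) ≤ φ (dist p q)) {p q : Y} (hpq : p ≤ q)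
    (n : ℕ) : dist (T^[n] p) (T^[n] q) ≤ φ^[n] (dist p q) := by
  induction n with
  | zero => rfl
  | succ n ih =>
    simp only [iterate_succ_apply']
    exact (hcontr _ _ (hT.iterate n hpq)).trans (hφ.mono _ _ dist_nonneg ih)

theorem cauchySeq_iterate_of_le_map (hφ : IsComparisonFunction φ) (hT : Monotone T)
    (hcontr : ∀ p q, p ≤ q → dist (T p) (T q) ≤ φ (dist p q)) {p : Y} (hp : p ≤ T p) :
    CauchySeq fun n => T^[n] p := by
  set u : ℕ → Y := fun n => T^[n] p
  have hu_succ (n : ℕ) : u (n + 1) = T (u n) := iterate_succ_apply' T n p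
  have hu : Monotone u := monotone_nat_of_le_succ fun n => by
    simpa only [u, iterate_succ_apply] using hT.iterate n hp
  rw [Metric.cauchySeq_iff']
  intro ε hε
  obtain ⟨N, hN⟩ : ∃ N, φ^[N] (dist p (T p)) < ε - φ ε :=
    ((hφ.tendsto_iterate _ dist_nonneg).eventually
      (gt_mem_nhds (sub_pos.2 (hφ.lt_self hε)))).exists
  -- The first step from `u N` is small, and every later step is a `φ`-image of one already
  -- within `ε`, so the orbit never leaves the `ε`-ball around `u N`.
  have hball : ∀ m, N ≤ m → dist (u N) (u m) < ε := by
    intro m hm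
    induction m, hm using Nat.le_induction with
    | base => simpa using hε
    | succ m hm ih =>
      calc dist (u N) (u (m + 1))
          ≤ dist (u N) (u (N + 1)) + dist (u (N + 1)) (u (m + 1)) := dist_triangle _ _ _
        _ ≤ φ^[N] (dist p (T p)) + φ ε := by
          gcongr
          · exact dist_iterate_le_of_le hφ hT hcontr hp N
          · rw [hu_succ, hu_succ]
            exact (hcontr _ _ (hu hm)).trans (hφ.mono _ _ dist_nonneg ih.le)
        _ < ε := by linarith
  exact ⟨N, fun n hn => dist_comm (u n) (u N) ▸ hball n hn⟩

theorem exists_isFixedPt_of_le_map [CompleteSpace Y] (hφ : IsComparisonFunction φ)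
    (hT : Monotone T) (hcontr : ∀ p q, p ≤ q → dist (T p) (T q) ≤ φ (dist p q))
    (hTc : Continuous T) {p : Y} (hp : p ≤ T p) : ∃ z, IsFixedPt T z :=
  let ⟨z, hz⟩ := cauchySeq_tendsto_of_complete (cauchySeq_iterate_of_le_map hφ hT hcontr hp)
  ⟨z, isFixedPt_of_tendsto_iterate hz hTc.continuousAt⟩

theorem tendsto_iterate_of_isFixedPt (hφ : IsComparisonFunction φ) (hT : Monotone T)
    (hcontr : ∀ p q, p ≤ q → dist (T p) (T q) ≤ φ (dist p q))
    (hlb : ∀ p q : Y, ∃ l, l ≤ p ∧ l ≤ q) {z : Y} (hz : IsFixedPt T z) (q : Y) :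
    Tendsto (fun n => T^[n] q) atTop (𝓝 z) := by
  obtain ⟨l, hlq, hlz⟩ := hlb q z
  rw [tendsto_iff_dist_tendsto_zero]
  refine squeeze_zero (fun _ => dist_nonneg) (fun n => ?_) (by
    simpa using (hφ.tendsto_iterate (dist l q) dist_nonneg).add
      (hφ.tendsto_iterate (dist l z) dist_nonneg))
  calc dist (T^[n] q) z = dist (T^[n] q) (T^[n] z) := by rw [(hz.iterate n).eq]
    _ ≤ dist (T^[n] l) (T^[n] q) + dist (T^[n] l) (T^[n] z) := dist_triangle_left _ _ _
    _ ≤ φ^[n] (dist l q) + φ^[n] (dist l z) :=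
      add_le_add (dist_iterate_le_of_le hφ hT hcontr hlq n)
        (dist_iterate_le_of_le hφ hT hcontr hlz n)

theorem Function.IsFixedPt.eq_of_isFixedPt (hφ : IsComparisonFunction φ) (hT : Monotone T)
    (hcontr : ∀ p q, p ≤ q → dist (T p) (T q) ≤ φ (dist p q))
    (hlb : ∀ p q : Y, ∃ l, l ≤ p ∧ l ≤ q) {z w : Y} (hz : IsFixedPt T z)
    (hw : IsFixedPt T w) : w = z :=
  tendsto_nhds_unique (tendsto_const_nhds.congr fun n => (hw.iterate n).eq.symm)
    (tendsto_iterate_of_isFixedPt hφ hT hcontr hlb hz w)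

end OrderedContraction

section MixedMonotone

variable {X : Type*}

/-- `(x, y) ↦ (A(x,y), A(y,x))`, on `X × Xᵒᵈ` so that mixed monotonicity of `A` becomes
monotonicity and the product (sup) metric is the `max` of the contraction condition. -/
def coupledMap (A : X → X → X) (p : X × Xᵒᵈ) : X × Xᵒᵈ :=
  (A p.1 (ofDual p.2), toDual (A (ofDual p.2) p.1))

theorem coupledMap_iterate (A : X → X → X) (n : ℕ) (x y : X) :
    (coupledMap A)^[n] (x, toDual y) = (siter A n x y, toDual (siter A n y x)) := by
  induction n with
  | zero => rfl
  | succ n ih => rw [iterate_succ_apply', ih]; rfl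

theorem isFixedPt_coupledMap_iff {A : X → X → X} {x y : X} :
    IsFixedPt (coupledMap A) (x, toDual y) ↔ A x y = x ∧ A y x = y := by
  simp [IsFixedPt, coupledMap]

theorem continuous_coupledMap [TopologicalSpace X] {A : X → X → X}
    (hA : Continuous fun p : X × X => A p.1 p.2) : Continuous (coupledMap A) :=
  (hA.comp (continuous_fst.prodMk (continuous_ofDual.comp continuous_snd))).prodMk
    (continuous_toDual.comp (hA.comp ((continuous_ofDual.comp continuous_snd).prodMk
      continuous_fst)))

variable [Preorder X]

theorem monotone_coupledMap {A : X → X → X}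
    (hmm : ∀ x y u v : X, x ≤ u → v ≤ y → A x y ≤ A u v) : Monotone (coupledMap A) :=
  fun _ _ h => ⟨hmm _ _ _ _ h.1 h.2, hmm _ _ _ _ h.2 h.1⟩

theorem dist_coupledMap_le [PseudoMetricSpace X] {A : X → X → X} {φ : ℝ → ℝ}
    (hcontr : ∀ x y u v : X, x ≤ u → v ≤ y →
      dist (A x y) (A u v) ≤ φ (max (dist x u) (dist y v)))
    (p q : X × Xᵒᵈ) (h : p ≤ q) : dist (coupledMap A p) (coupledMap A q) ≤ φ (dist p q) := by
  obtain ⟨x, y⟩ := p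
  obtain ⟨u, v⟩ := q
  refine max_le (hcontr _ _ _ _ h.1 h.2) ?_
  have h' := hcontr (ofDual v) u (ofDual y) x h.2 h.1
  rwa [dist_comm, dist_comm (ofDual v), dist_comm u, max_comm] at h'

end MixedMonotone

theorem mixedMonotone_fixed_point_general
    {X : Type*} [PartialOrder X] [MetricSpace X] [CompleteSpace X]
    (hbi : ∀ a b : X, (∃ l, l ≤ a ∧ l ≤ b) ∧ (∃ u, a ≤ u ∧ b ≤ u))
    (A : X → X → X)
    (hmm : ∀ x y u v : X, x ≤ u → v ≤ y → A x y ≤ A u v)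
    (φ : ℝ → ℝ)
    (hφ_mono : ∀ s t : ℝ, 0 ≤ s → s ≤ t → φ s ≤ φ t)
    (hφ_iter : ∀ t : ℝ, 0 ≤ t → Tendsto (fun n => φ^[n] t) atTop (𝓝 0))
    (hcontr : ∀ x y u v : X, x ≤ u → v ≤ y →
      dist (A x y) (A u v) ≤ φ (max (dist x u) (dist y v)))
    (hcont : Continuous fun p : X × X => A p.1 p.2)
    (x₀ y₀ : X) (hx₀ : x₀ ≤ A x₀ y₀) (hy₀ : A y₀ x₀ ≤ y₀) :
    ∃ xs : X, A xs xs = xs ∧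
      (∀ x y : X, A x y = x ∧ A y x = y → x = xs ∧ y = xs) ∧
      (∀ x y : X, Tendsto (fun n => siter A n x y) atTop (𝓝 xs)) := by
  have hφ : IsComparisonFunction φ := ⟨hφ_mono, hφ_iter⟩
  have : CompleteSpace Xᵒᵈ := ‹CompleteSpace X›
  have hF := monotone_coupledMap hmm
  have hFcontr := dist_coupledMap_le hcontr
  have hlb : ∀ p q : X × Xᵒᵈ, ∃ l, l ≤ p ∧ l ≤ q := fun p q => by
    obtain ⟨⟨l, hlp, hlq⟩, -⟩ := hbi p.1 q.1
    obtain ⟨-, ⟨u, hup, huq⟩⟩ := hbi (ofDual p.2) (ofDual q.2)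
    exact ⟨(l, toDual u), ⟨hlp, hup⟩, ⟨hlq, huq⟩⟩
  obtain ⟨⟨a, b'⟩, hab⟩ := exists_isFixedPt_of_le_map hφ hF hFcontr
    (continuous_coupledMap hcont) (p := (x₀, toDual y₀)) ⟨hx₀, hy₀⟩
  obtain ⟨b, rfl⟩ := toDual.surjective b'
  have huniq : ∀ x y, A x y = x ∧ A y x = y → x = a ∧ y = b := fun x y h => by
    simpa using IsFixedPt.eq_of_isFixedPt hφ hF hFcontr hlb hab (isFixedPt_coupledMap_iff.2 h)
  have hfix := isFixedPt_coupledMap_iff.1 hab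
  obtain ⟨hba, -⟩ := huniq _ _ hfix.symm
  refine ⟨a, hba ▸ hfix.1, hba ▸ huniq, fun x y => ?_⟩
  have h := tendsto_iterate_of_isFixedPt hφ hF hFcontr hlb hab (x, toDual y)
  simp only [coupledMap_iterate] at h
  exact h.fst_nhds

/-- Fixed point theorem for mixed monotone φ-contractions on a bi-directed partially
ordered complete metric space (Theorem 3.2 of the paper, continuity case). -/
theorem mixedMonotone_fixed_point
    {X : Type*} [PartialOrder X] [MetricSpace X] [CompleteSpace X]
    (hbi : ∀ a b : X, (∃ l, l ≤ a ∧ l ≤ b) ∧ (∃ u, a ≤ u ∧ b ≤ u))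
    (A : X → X → X)
    (hmm : ∀ x y u v : X, x ≤ u → v ≤ y → A x y ≤ A u v)
    (φ : ℝ → ℝ)
    (hφ_mono : ∀ s t : ℝ, 0 ≤ s → s ≤ t → φ s ≤ φ t)
    (hφ_pos : ∀ t : ℝ, 0 ≤ t → 0 ≤ φ t)
    (hφ_iter : ∀ t : ℝ, 0 ≤ t → Tendsto (fun n => φ^[n] t) atTop (𝓝 0))
    (hcontr : ∀ x y u v : X, x ≤ u → v ≤ y →
      dist (A x y) (A u v) ≤ φ (max (dist x u) (dist y v)))
    (hcont : Continuous fun p : X × X => A p.1 p.2)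
    (x₀ y₀ : X) (hx₀ : x₀ ≤ A x₀ y₀) (hy₀ : A y₀ x₀ ≤ y₀) :
    ∃ xs : X, A xs xs = xs ∧
      (∀ x y : X, A x y = x ∧ A y x = y → x = xs ∧ y = xs) ∧
      (∀ x y : X, Tendsto (fun n => siter A n x y) atTop (𝓝 xs)) :=
  mixedMonotone_fixed_point_general hbi A hmm φ hφ_mono hφ_iter hcontr hcont x₀ y₀ hx₀ hy₀
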